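/- arXiv:2410.06012 — 2 statements merged into one kernel-verified Lean document; each statement's English description precedes it below -/
import Mathlib

section
/- (Change of the validation loss under one training update, the cross-term bound in the proof of Theorem 1). Let E be a finite-dimensional real inner product space, L ≥ 0, λ ≥ 0, ρ ≥ 0, σ ≥ 0. Let G : E → ℝ be differentiable and L-smooth, and let v ∈ E with ‖v‖ ≤ ρ (playing the role of the training gradient ∇H(α)), u ∈ E with ‖u‖ ≤ λ, and η ≥ 0. Let φ be an E-valued square-integrable random vector with E[φ] = 0 and E[‖φ‖²] ≤ σ², and assume ω ↦ G(α − η(v + φ(ω) + u)) is integrable. Then for every α ∈ E, E[G(α − η(v + φ + u))] − G(α) ≤ η(ρ + λ)‖∇G(α)‖ + (Lη²/2)((ρ + λ)² + σ²). -/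
/-! The descent lemma `G (x + d) ≤ G x + ⟪∇G x, d⟫ + L/2 ‖d‖²`, applied pointwise with
`d = -η (v + u + φ)` and integrated, loses the terms linear in the centred noise `φ`; what is left
is bounded by Cauchy–Schwarz and `‖v + u‖ ≤ ρ + λ`. -/

open MeasureTheory Set
open scoped InnerProductSpace

theorem le_add_deriv_add_half_of_deriv_le_add_mul {f f' : ℝ → ℝ} {K : ℝ}
    (hf : ∀ t ∈ Icc (0 : ℝ) 1, HasDerivAt f (f' t) t)
    (hf' : ∀ t ∈ Ioo (0 : ℝ) 1, f' t ≤ f' 0 + K * t) :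
    f 1 ≤ f 0 + f' 0 + K / 2 := by
  let F : ℝ → ℝ := fun t ↦ f t - t * f' 0 - K / 2 * t ^ 2
  have hF : ∀ t ∈ Icc (0 : ℝ) 1, HasDerivAt F (f' t - f' 0 - K * t) t := fun t ht ↦ by
    refine (((hf t ht).sub ((hasDerivAt_id t).mul_const (f' 0))).sub
      ((hasDerivAt_pow 2 t).const_mul (K / 2))).congr_deriv ?_
    norm_num
    ring
  have hanti : AntitoneOn F (Icc 0 1) := by
    refine antitoneOn_of_hasDerivWithinAt_nonpos (convex_Icc 0 1)
      (fun t ht ↦ (hF t ht).continuousAt.continuousWithinAt)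
      (fun t ht ↦ (hF t (interior_subset ht)).hasDerivWithinAt) fun t ht ↦ ?_
    rw [interior_Icc] at ht
    linarith [hf' t ht]
  have := hanti (left_mem_Icc.2 zero_le_one) (right_mem_Icc.2 zero_le_one) zero_le_one
  simp only [F] at this
  linarith

theorem le_add_inner_gradient_add_sq_of_lipschitz_gradient {E : Type*} [NormedAddCommGroup E]
    [InnerProductSpace ℝ E] [CompleteSpace E] {G : E → ℝ} {L : ℝ} (hdiff : Differentiable ℝ G)
    (hsmooth : ∀ x y : E, ‖gradient G x - gradient G y‖ ≤ L * ‖x - y‖) (x d : E) :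
    G (x + d) ≤ G x + ⟪gradient G x, d⟫_ℝ + L / 2 * ‖d‖ ^ 2 := by
  have hderiv (t : ℝ) :
      HasDerivAt (fun t : ℝ ↦ G (x + t • d)) ⟪gradient G (x + t • d), d⟫_ℝ t := by
    have hline : HasDerivAt (fun t : ℝ ↦ x + t • d) d t := by
      simpa using ((hasDerivAt_id t).smul_const d).const_add x
    have := (hdiff _).hasGradientAt.hasFDerivAt.comp_hasDerivAt t hline
    simp only [InnerProductSpace.toDual_apply_apply] at this
    exact this
  have hslope (t : ℝ) (ht : t ∈ Ioo (0 : ℝ) 1) :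
      ⟪gradient G (x + t • d), d⟫_ℝ ≤ ⟪gradient G (x + (0 : ℝ) • d), d⟫_ℝ + L * ‖d‖ ^ 2 * t := by
    have hlip : ‖gradient G (x + t • d) - gradient G x‖ ≤ L * (t * ‖d‖) := by
      simpa [norm_smul, abs_of_pos ht.1] using hsmooth (x + t • d) x
    calc ⟪gradient G (x + t • d), d⟫_ℝ
        = ⟪gradient G x, d⟫_ℝ + ⟪gradient G (x + t • d) - gradient G x, d⟫_ℝ := by
          rw [inner_sub_left]; ring
      _ ≤ ⟪gradient G x, d⟫_ℝ + L * (t * ‖d‖) * ‖d‖ := by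
          gcongr
          exact (real_inner_le_norm _ _).trans (by gcongr)
      _ = _ := by simp only [zero_smul, add_zero]; ring
  have := le_add_deriv_add_half_of_deriv_le_add_mul (fun t _ ↦ hderiv t) hslope
  simp only [zero_smul, add_zero, one_smul] at this
  linarith

section CenteredNoise

variable {E : Type*} [NormedAddCommGroup E] [InnerProductSpace ℝ E] [CompleteSpace E]
  {Ω : Type*} [MeasurableSpace Ω] {μ : Measure Ω} {φ : Ω → E}

theorem integral_inner_add_of_integral_eq_zero (hφ : Integrable φ μ) (hmean : ∫ ω, φ ω ∂μ = 0)
    [IsProbabilityMeasure μ] (g w : E) :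
    ∫ ω, ⟪g, w + φ ω⟫_ℝ ∂μ = ⟪g, w⟫_ℝ := by
  simp only [inner_add_right]
  rw [integral_add (integrable_const _) (hφ.const_inner g), integral_inner hφ, hmean]
  simp

theorem integral_norm_add_sq_of_integral_eq_zero (hφ : MemLp φ 2 μ) (hmean : ∫ ω, φ ω ∂μ = 0)
    [IsProbabilityMeasure μ] (w : E) :
    ∫ ω, ‖w + φ ω‖ ^ 2 ∂μ = ‖w‖ ^ 2 + ∫ ω, ‖φ ω‖ ^ 2 ∂μ := by
  have hint : Integrable φ μ := hφ.integrable one_le_two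
  have hsq : Integrable (fun ω ↦ ‖φ ω‖ ^ 2) μ :=
    (memLp_two_iff_integrable_sq_norm hφ.1).1 hφ
  simp only [norm_add_sq_real]
  rw [integral_add (by fun_prop) hsq, integral_add (by fun_prop) (by fun_prop), integral_const_mul,
    integral_inner hint, hmean]
  simp

theorem integral_comp_sub_smul_le_of_lipschitz_gradient [IsProbabilityMeasure μ] {G : E → ℝ}
    {L : ℝ} (hdiff : Differentiable ℝ G)
    (hsmooth : ∀ x y : E, ‖gradient G x - gradient G y‖ ≤ L * ‖x - y‖) (hφ : MemLp φ 2 μ)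
    (hmean : ∫ ω, φ ω ∂μ = 0) (x w : E) (η : ℝ)
    (hint : Integrable (fun ω ↦ G (x - η • (w + φ ω))) μ) :
    ∫ ω, G (x - η • (w + φ ω)) ∂μ ≤
      G x - η * ⟪gradient G x, w⟫_ℝ + L * η ^ 2 / 2 * (‖w‖ ^ 2 + ∫ ω, ‖φ ω‖ ^ 2 ∂μ) := by
  set g := gradient G x
  have hstep (ω : Ω) : G (x - η • (w + φ ω)) ≤
      G x - η * ⟪g, w + φ ω⟫_ℝ + L * η ^ 2 / 2 * ‖w + φ ω‖ ^ 2 := by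
    have := le_add_inner_gradient_add_sq_of_lipschitz_gradient hdiff hsmooth x (-(η • (w + φ ω)))
    rw [← sub_eq_add_neg, inner_neg_right, real_inner_smul_right, norm_neg, norm_smul, mul_pow,
      Real.norm_eq_abs, sq_abs] at this
    linarith
  have hinner : Integrable (fun ω ↦ ⟪g, w + φ ω⟫_ℝ) μ :=
    ((integrable_const w).add (hφ.integrable one_le_two)).const_inner g
  have hsq : Integrable (fun ω ↦ ‖w + φ ω‖ ^ 2) μ :=
    have hshifted : MemLp (fun ω ↦ w + φ ω) 2 μ := (memLp_const w).add hφ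
    (memLp_two_iff_integrable_sq_norm hshifted.1).1 hshifted
  calc ∫ ω, G (x - η • (w + φ ω)) ∂μ
      ≤ ∫ ω, (G x - η * ⟪g, w + φ ω⟫_ℝ + L * η ^ 2 / 2 * ‖w + φ ω‖ ^ 2) ∂μ :=
        integral_mono hint (by fun_prop) hstep
    _ = _ := by
        rw [integral_add (by fun_prop) (by fun_prop), integral_sub (by fun_prop) (by fun_prop),
          integral_const_mul, integral_const_mul,
          integral_inner_add_of_integral_eq_zero (hφ.integrable one_le_two) hmean,
          integral_norm_add_sq_of_integral_eq_zero hφ hmean]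
        simp

end CenteredNoise

theorem validation_loss_change_under_training_update_general
    {E : Type*} [NormedAddCommGroup E] [InnerProductSpace ℝ E] [FiniteDimensional ℝ E]
    {Ω : Type*} [MeasurableSpace Ω] (μ : Measure Ω) [IsProbabilityMeasure μ]
    {L lam ρ σ : ℝ} (hL : 0 ≤ L)
    (G : E → ℝ)
    (hdiff : Differentiable ℝ G)
    (hsmooth : ∀ x y : E, ‖gradient G x - gradient G y‖ ≤ L * ‖x - y‖)
    (v : E) (hv : ‖v‖ ≤ ρ) (u : E) (hu : ‖u‖ ≤ lam) (η : ℝ) (hη : 0 ≤ η)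
    (φ : Ω → E) (hφ2 : MemLp φ 2 μ)
    (hmean : ∫ ω, φ ω ∂μ = 0)
    (hvar : ∫ ω, ‖φ ω‖ ^ 2 ∂μ ≤ σ ^ 2)
    (α : E)
    (hint : Integrable (fun ω => G (α - η • (v + φ ω + u))) μ) :
    (∫ ω, G (α - η • (v + φ ω + u)) ∂μ) - G α ≤
      η * (ρ + lam) * ‖gradient G α‖
        + (L * η ^ 2 / 2) * ((ρ + lam) ^ 2 + σ ^ 2) := by
  have hshift (ω : Ω) : v + φ ω + u = (v + u) + φ ω := add_right_comm v (φ ω) u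
  simp only [hshift] at hint ⊢
  have hexp :=
    integral_comp_sub_smul_le_of_lipschitz_gradient hdiff hsmooth hφ2 hmean α (v + u) η hint
  have hvu : ‖v + u‖ ≤ ρ + lam := (norm_add_le v u).trans (add_le_add hv hu)
  have hcross : -⟪gradient G α, v + u⟫_ℝ ≤ (ρ + lam) * ‖gradient G α‖ :=
    calc -⟪gradient G α, v + u⟫_ℝ ≤ ‖gradient G α‖ * ‖v + u‖ :=
          (neg_le_abs _).trans (abs_real_inner_le_norm _ _)
      _ ≤ (ρ + lam) * ‖gradient G α‖ := by rw [mul_comm]; gcongr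
  calc (∫ ω, G (α - η • (v + u + φ ω)) ∂μ) - G α
      ≤ η * -⟪gradient G α, v + u⟫_ℝ + L * η ^ 2 / 2 * (‖v + u‖ ^ 2 + ∫ ω, ‖φ ω‖ ^ 2 ∂μ) := by
        linarith
    _ ≤ η * ((ρ + lam) * ‖gradient G α‖) + L * η ^ 2 / 2 * ((ρ + lam) ^ 2 + σ ^ 2) := by
        gcongr
    _ = _ := by ring

/-- **Change of the validation loss under one training update** (the cross-term bound in the
proof of Theorem 1 of "Generalized Sparse Additive Model with Unknown Link Function").
If `G` is differentiable and `L`-smooth, `v` plays the role of the training gradient with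
`‖v‖ ≤ ρ`, `u` is a regularizer (sub)gradient with `‖u‖ ≤ λ`, `η ≥ 0`, and `φ` is a
square-integrable centered noise with `E[‖φ‖²] ≤ σ²`, then for every `α`,
`E[G(α − η(v + φ + u))] − G(α) ≤ η(ρ + λ)‖∇G(α)‖ + (Lη²/2)((ρ + λ)² + σ²)`. -/
theorem validation_loss_change_under_training_update
    {E : Type*} [NormedAddCommGroup E] [InnerProductSpace ℝ E] [FiniteDimensional ℝ E]
    {Ω : Type*} [MeasurableSpace Ω] (μ : Measure Ω) [IsProbabilityMeasure μ]
    {L lam ρ σ : ℝ} (hL : 0 ≤ L) (hlam : 0 ≤ lam) (hρ : 0 ≤ ρ) (hσ : 0 ≤ σ)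
    (G : E → ℝ)
    (hdiff : Differentiable ℝ G)
    (hsmooth : ∀ x y : E, ‖gradient G x - gradient G y‖ ≤ L * ‖x - y‖)
    (v : E) (hv : ‖v‖ ≤ ρ) (u : E) (hu : ‖u‖ ≤ lam) (η : ℝ) (hη : 0 ≤ η)
    (φ : Ω → E) (hφ2 : MemLp φ 2 μ)
    (hmean : ∫ ω, φ ω ∂μ = 0)
    (hvar : ∫ ω, ‖φ ω‖ ^ 2 ∂μ ≤ σ ^ 2)
    (α : E)
    (hint : Integrable (fun ω => G (α - η • (v + φ ω + u))) μ) :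
    (∫ ω, G (α - η • (v + φ ω + u)) ∂μ) - G α ≤
      η * (ρ + lam) * ‖gradient G α‖
        + (L * η ^ 2 / 2) * ((ρ + lam) ^ 2 + σ ^ 2) :=
  validation_loss_change_under_training_update_general μ hL G hdiff hsmooth v hv u hu η hη φ hφ2
    hmean hvar α hint
end

section
/- (Per-iteration expected bound for the validation loss, inequality (15) in the proof of Theorem 1). Let p, d, q ≥ 1 be integers, A = (ℝ^d)^p with blocks α_1, …, α_p ∈ ℝ^d, Θ = ℝ^q, both with Euclidean norms, and u(α) ∈ A the vector with blocks α_j/‖α_j‖₂ (defined when all blocks are nonzero). Let G, H : A × Θ → ℝ be differentiable and L-smooth (L > 0) with ‖∇_{α_j} H(α, θ)‖₂ ≤ ρ for every block j and every (α, θ). Fix λ ≥ 0, σ ≥ 0, η ≥ 0, ν ≥ 0, and a point (α, θ) ∈ A × Θ with all blocks α_j nonzero. On a probability space let φ be an A-valued square-integrable random vector with E[φ] = 0 and E[‖φ‖₂²] ≤ σ², set ᾱ' = α − η(∇_α H(α, θ) + φ + λ u(α)), let ξ be a Θ-valued square-integrable random vector with E[ξ | φ] = 0 and E[‖ξ‖₂²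 | φ] ≤ σ² almost surely, and set θ' = θ − ν(∇_θ G(ᾱ', θ) + ξ). Assume the relevant compositions are integrable. Then (ν − Lν²/2) E[‖∇_θ G(ᾱ', θ)‖₂²] ≤ G(α, θ) − E[G(ᾱ', θ')] + (Lν²/2)σ² + (ρ + λ) η Σ_{j=1}^{p} ‖∇_{α_j} G(α, θ)‖₂ + (Lη²/2)(p(ρ + λ)² + σ²). -/
open MeasureTheory

noncomputable section

/-- The grouped parameter space `A = (ℝ^d)^p`, realized as a Euclidean space indexed by
pairs `(j, k)` with `j` the block index. -/
abbrev GroupedSpace (p d : ℕ) := EuclideanSpace ℝ (Fin p × Fin d)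

/-- The `j`-th block `α_j ∈ ℝ^d` of `α ∈ (ℝ^d)^p`. -/
def blockOf {p d : ℕ} (α : GroupedSpace p d) (j : Fin p) : EuclideanSpace ℝ (Fin d) :=
  WithLp.toLp 2 (fun k => α (j, k))

/-- Replace the `j`-th block of `α` by `x`. -/
def updateBlock {p d : ℕ} (α : GroupedSpace p d) (j : Fin p) (x : EuclideanSpace ℝ (Fin d)) :
    GroupedSpace p d :=
  WithLp.toLp 2 (fun ik => if ik.1 = j then x ik.2 else α ik)

/-- The blockwise-normalized vector `u(α)` with blocks `u(α)_j = α_j / ‖α_j‖₂`. -/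
def unitBlocks {p d : ℕ} (α : GroupedSpace p d) : GroupedSpace p d :=
  WithLp.toLp 2 (fun ik => ‖blockOf α ik.1‖⁻¹ * α ik)

/-- Partial gradient `∇_α f(α, θ)` with respect to the whole first argument. -/
def gradAlpha {p d q : ℕ} (f : GroupedSpace p d → EuclideanSpace ℝ (Fin q) → ℝ)
    (α : GroupedSpace p d) (θ : EuclideanSpace ℝ (Fin q)) : GroupedSpace p d :=
  gradient (fun a => f a θ) α

/-- Partial gradient `∇_θ f(α, θ)` with respect to the second argument. -/
def gradTheta {p d q : ℕ} (f : GroupedSpace p d → EuclideanSpace ℝ (Fin q) → ℝ)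
    (α : GroupedSpace p d) (θ : EuclideanSpace ℝ (Fin q)) : EuclideanSpace ℝ (Fin q) :=
  gradient (fun t => f α t) θ

/-- Partial gradient `∇_{α_j} f(α, θ)` with respect to the `j`-th block of `α`. -/
def gradBlock {p d q : ℕ} (f : GroupedSpace p d → EuclideanSpace ℝ (Fin q) → ℝ) (j : Fin p)
    (α : GroupedSpace p d) (θ : EuclideanSpace ℝ (Fin q)) : EuclideanSpace ℝ (Fin d) :=
  gradient (fun x => f (updateBlock α j x) θ) (blockOf α j)

/-- The function on the `ℓ²`-product space `A ×₂ Θ` associated to `f : A → Θ → ℝ`. -/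
def jointFun {p d q : ℕ} (f : GroupedSpace p d → EuclideanSpace ℝ (Fin q) → ℝ) :
    WithLp 2 (GroupedSpace p d × EuclideanSpace ℝ (Fin q)) → ℝ :=
  fun y => f (WithLp.equiv 2 _ y).1 (WithLp.equiv 2 _ y).2

/-- `f : A → Θ → ℝ` is differentiable and `L`-smooth jointly in `(α, θ)`:
its gradient on the `ℓ²`-product space is `L`-Lipschitz. -/
def IsSmooth {p d q : ℕ} (L : ℝ) (f : GroupedSpace p d → EuclideanSpace ℝ (Fin q) → ℝ) : Prop :=
  Differentiable ℝ (jointFun f) ∧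
    ∀ x y, ‖gradient (jointFun f) x - gradient (jointFun f) y‖ ≤ L * ‖x - y‖

/-!
The descent lemma for the `L`-smooth `G` is applied twice: in `θ` at `ᾱ'`, and in `α` at `θ`.
Taking expectations kills both cross terms: `⟪∇_θ G(ᾱ', θ), ξ⟫` because `∇_θ G(ᾱ', θ)` is a
(Lipschitz, hence square-integrable) function of `φ` and `E[ξ | φ] = 0`, and `⟪·, φ⟫` because
`E[φ] = 0`. What remains of the `α`-step is governed by the drift `c = ∇_α H(α, θ) + λ u(α)`,
whose blocks all have norm at most `ρ + λ`; blockwise Cauchy–Schwarz then gives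
`-⟪∇_α G(α, θ), c⟫ ≤ (ρ + λ) Σ_j ‖∇_{α_j} G(α, θ)‖` and `‖c‖² ≤ p (ρ + λ)²`.
-/

section Descent

variable {E : Type*} [NormedAddCommGroup E] [InnerProductSpace ℝ E] [CompleteSpace E]

theorem descent_lemma {f : E → ℝ} {L : ℝ} (hf : Differentiable ℝ f)
    (hlip : ∀ x y, ‖gradient f x - gradient f y‖ ≤ L * ‖x - y‖) (x y : E) :
    f y ≤ f x + inner ℝ (gradient f x) (y - x) + L / 2 * ‖y - x‖ ^ 2 := by
  set v := y - x
  -- the gap to the quadratic upper model is antitone along the segment from `x` to `y`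
  let h : ℝ → ℝ := fun t =>
    f (x + t • v) - t * inner ℝ (gradient f x) v - L / 2 * ‖v‖ ^ 2 * t ^ 2
  have hderiv (t : ℝ) : HasDerivAt h
      (inner ℝ (gradient f (x + t • v) - gradient f x) v - L * ‖v‖ ^ 2 * t) t := by
    have hline : HasDerivAt (fun s : ℝ => x + s • v) v t := by
      simpa using ((hasDerivAt_id t).smul_const v).const_add x
    have hfline := (hf (x + t • v)).hasGradientAt.hasFDerivAt.comp_hasDerivAt t hline
    refine ((hfline.sub ((hasDerivAt_id t).mul_const _)).sub
      (((hasDerivAt_id t).pow 2).const_mul (L / 2 * ‖v‖ ^ 2))).congr_deriv ?_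
    simp only [InnerProductSpace.toDual_apply_apply, inner_sub_left, id]
    ring
  have hanti : AntitoneOn h (Set.Icc 0 1) := by
    refine antitoneOn_of_deriv_nonpos (convex_Icc 0 1)
      (fun t _ => (hderiv t).continuousAt.continuousWithinAt)
      (fun t _ => (hderiv t).differentiableAt.differentiableWithinAt) fun t ht => ?_
    rw [interior_Icc] at ht
    rw [(hderiv t).deriv, sub_nonpos]
    calc inner ℝ (gradient f (x + t • v) - gradient f x) v
        ≤ ‖gradient f (x + t • v) - gradient f x‖ * ‖v‖ := real_inner_le_norm _ _
      _ ≤ L * ‖t • v‖ * ‖v‖ := by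
          gcongr
          simpa using hlip (x + t • v) x
      _ = L * ‖v‖ ^ 2 * t := by
          rw [norm_smul, Real.norm_of_nonneg ht.1.le]; ring
  have h01 := hanti (by simp) (by simp) zero_le_one
  simp only [h, v, one_smul, add_sub_cancel, zero_smul, add_zero, one_mul, one_pow, mul_one,
    zero_mul, sub_zero, ne_eq, OfNat.ofNat_ne_zero, not_false_eq_true, zero_pow] at h01
  linarith

end Descent

section PartialGradient

variable {E F : Type*} [NormedAddCommGroup E] [InnerProductSpace ℝ E] [CompleteSpace E]
  [NormedAddCommGroup F] [InnerProductSpace ℝ F] [CompleteSpace F]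
  {f : WithLp 2 (E × F) → ℝ} {g : WithLp 2 (E × F)} {a : E} {t : F}

theorem HasGradientAt.comp_toLp_left (hf : HasGradientAt f g (WithLp.toLp 2 (a, t))) :
    HasGradientAt (fun x => f (WithLp.toLp 2 (x, t))) g.fst a := by
  have hincl : HasFDerivAt (fun x : E => WithLp.toLp 2 (x, t))
      ((WithLp.prodContinuousLinearEquiv 2 ℝ E F).symm.toContinuousLinearMap.comp
        (ContinuousLinearMap.inl ℝ E F)) a :=
    (WithLp.prodContinuousLinearEquiv 2 ℝ E F).symm.hasFDerivAt.comp a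
      (hasFDerivAt_prodMk_left a t)
  rw [hasGradientAt_iff_hasFDerivAt]
  refine (hf.hasFDerivAt.comp a hincl).congr_fderiv ?_
  ext w
  simp [WithLp.prod_inner_apply]

theorem HasGradientAt.comp_toLp_right (hf : HasGradientAt f g (WithLp.toLp 2 (a, t))) :
    HasGradientAt (fun y => f (WithLp.toLp 2 (a, y))) g.snd t := by
  have hincl : HasFDerivAt (fun y : F => WithLp.toLp 2 (a, y))
      ((WithLp.prodContinuousLinearEquiv 2 ℝ E F).symm.toContinuousLinearMap.comp
        (ContinuousLinearMap.inr ℝ E F)) t :=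
    (WithLp.prodContinuousLinearEquiv 2 ℝ E F).symm.hasFDerivAt.comp t
      (hasFDerivAt_prodMk_right a t)
  rw [hasGradientAt_iff_hasFDerivAt]
  refine (hf.hasFDerivAt.comp t hincl).congr_fderiv ?_
  ext w
  simp [WithLp.prod_inner_apply]

end PartialGradient

section Smooth

variable {p d q : ℕ} {L : ℝ} {f : GroupedSpace p d → EuclideanSpace ℝ (Fin q) → ℝ}

@[simp]
theorem jointFun_toLp (a : GroupedSpace p d) (t : EuclideanSpace ℝ (Fin q)) :
    jointFun f (WithLp.toLp 2 (a, t)) = f a t :=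
  rfl

theorem hasGradientAt_gradAlpha (hf : Differentiable ℝ (jointFun f)) (a : GroupedSpace p d)
    (t : EuclideanSpace ℝ (Fin q)) :
    HasGradientAt (fun x => f x t) (gradient (jointFun f) (WithLp.toLp 2 (a, t))).fst a :=
  (hf _).hasGradientAt.comp_toLp_left

theorem gradAlpha_eq_fst (hf : Differentiable ℝ (jointFun f)) (a : GroupedSpace p d)
    (t : EuclideanSpace ℝ (Fin q)) :
    gradAlpha f a t = (gradient (jointFun f) (WithLp.toLp 2 (a, t))).fst :=
  (hasGradientAt_gradAlpha hf a t).gradient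

theorem gradTheta_eq_snd (hf : Differentiable ℝ (jointFun f)) (a : GroupedSpace p d)
    (t : EuclideanSpace ℝ (Fin q)) :
    gradTheta f a t = (gradient (jointFun f) (WithLp.toLp 2 (a, t))).snd :=
  (hf _).hasGradientAt.comp_toLp_right.gradient

theorem IsSmooth.le_add_inner_add (hf : IsSmooth L f) (a a' : GroupedSpace p d)
    (t t' : EuclideanSpace ℝ (Fin q)) :
    f a' t' ≤ f a t + inner ℝ (gradAlpha f a t) (a' - a) + inner ℝ (gradTheta f a t) (t' - t)
      + L / 2 * (‖a' - a‖ ^ 2 + ‖t' - t‖ ^ 2) := by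
  have h := descent_lemma hf.1 hf.2 (WithLp.toLp 2 (a, t)) (WithLp.toLp 2 (a', t'))
  rw [WithLp.prod_inner_apply, WithLp.prod_norm_sq_eq_of_L2] at h
  simp only [jointFun_toLp, WithLp.ofLp_fst, WithLp.ofLp_snd, WithLp.sub_fst, WithLp.sub_snd,
    WithLp.toLp_fst, WithLp.toLp_snd] at h
  rw [gradAlpha_eq_fst hf.1, gradTheta_eq_snd hf.1]
  linarith

theorem IsSmooth.lipschitzWith_gradTheta (hf : IsSmooth L f) (t : EuclideanSpace ℝ (Fin q)) :
    LipschitzWith L.toNNReal (fun a => gradTheta f a t) := by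
  refine LipschitzWith.of_dist_le_mul fun a a' => ?_
  simp only [gradTheta_eq_snd hf.1]
  calc dist _ _ ≤ dist (gradient (jointFun f) (WithLp.toLp 2 (a, t)))
        (gradient (jointFun f) (WithLp.toLp 2 (a', t))) := WithLp.dist_snd_le _ _
    _ ≤ L * ‖WithLp.toLp 2 (a, t) - WithLp.toLp 2 (a', t)‖ := by
        rw [dist_eq_norm]; exact hf.2 _ _
    _ ≤ L.toNNReal * dist a a' := by
        rw [← WithLp.toLp_sub, Prod.mk_sub_mk, sub_self, WithLp.norm_toLp_fst, dist_eq_norm]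
        gcongr
        exact Real.le_coe_toNNReal L

end Smooth

section Blocks

variable {p d : ℕ}

@[simp]
theorem blockOf_apply (a : GroupedSpace p d) (j : Fin p) (k : Fin d) :
    blockOf a j k = a (j, k) :=
  rfl

@[simp]
theorem blockOf_add (a b : GroupedSpace p d) (j : Fin p) :
    blockOf (a + b) j = blockOf a j + blockOf b j :=
  rfl

@[simp]
theorem blockOf_smul (r : ℝ) (a : GroupedSpace p d) (j : Fin p) :
    blockOf (r • a) j = r • blockOf a j :=
  rfl

theorem inner_eq_sum_inner_blockOf (a b : GroupedSpace p d) :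
    inner ℝ a b = ∑ j, inner ℝ (blockOf a j) (blockOf b j) := by
  simp only [PiLp.inner_apply, blockOf_apply, Fintype.sum_prod_type]

theorem norm_sq_eq_sum_norm_blockOf_sq (a : GroupedSpace p d) :
    ‖a‖ ^ 2 = ∑ j, ‖blockOf a j‖ ^ 2 := by
  simp only [← real_inner_self_eq_norm_sq, inner_eq_sum_inner_blockOf]

theorem norm_blockOf_unitBlocks {α : GroupedSpace p d} {j : Fin p} (h : blockOf α j ≠ 0) :
    ‖blockOf (unitBlocks α) j‖ = 1 := by
  change ‖‖blockOf α j‖⁻¹ • blockOf α j‖ = 1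
  rw [norm_smul, norm_inv, norm_norm, inv_mul_cancel₀ (norm_ne_zero_iff.mpr h)]

theorem norm_blockOf_add_smul_unitBlocks_le {v α : GroupedSpace p d} {j : Fin p} {ρ lam : ℝ}
    (hv : ‖blockOf v j‖ ≤ ρ) (hα : blockOf α j ≠ 0) (hlam : 0 ≤ lam) :
    ‖blockOf (v + lam • unitBlocks α) j‖ ≤ ρ + lam := by
  calc ‖blockOf (v + lam • unitBlocks α) j‖
      ≤ ‖blockOf v j‖ + ‖lam • blockOf (unitBlocks α) j‖ := by
        rw [blockOf_add, blockOf_smul]; exact norm_add_le _ _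
    _ ≤ ρ + lam := by
        rw [norm_smul, norm_blockOf_unitBlocks hα, Real.norm_of_nonneg hlam, mul_one]
        linarith

theorem norm_sq_le_of_norm_blockOf_le {c : GroupedSpace p d} {r : ℝ}
    (hc : ∀ j, ‖blockOf c j‖ ≤ r) : ‖c‖ ^ 2 ≤ p * r ^ 2 := by
  rw [norm_sq_eq_sum_norm_blockOf_sq]
  calc ∑ j, ‖blockOf c j‖ ^ 2 ≤ ∑ _j : Fin p, r ^ 2 := by
        gcongr with j; exact hc j
    _ = p * r ^ 2 := by simp

theorem abs_inner_le_of_norm_blockOf_le {c : GroupedSpace p d} {r : ℝ}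
    (hc : ∀ j, ‖blockOf c j‖ ≤ r) (a : GroupedSpace p d) :
    |inner ℝ a c| ≤ r * ∑ j, ‖blockOf a j‖ := by
  rw [inner_eq_sum_inner_blockOf, Finset.mul_sum]
  refine (Finset.abs_sum_le_sum_abs _ _).trans (Finset.sum_le_sum fun j _ => ?_)
  calc |inner ℝ (blockOf a j) (blockOf c j)| ≤ ‖blockOf a j‖ * ‖blockOf c j‖ :=
        abs_real_inner_le_norm _ _
    _ ≤ r * ‖blockOf a j‖ := by
        rw [mul_comm]; gcongr; exact hc j

def blockIncl (j : Fin p) : EuclideanSpace ℝ (Fin d) →L[ℝ] GroupedSpace p d :=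
  (PiLp.continuousLinearEquiv 2 ℝ _).symm.toContinuousLinearMap.comp
    (ContinuousLinearMap.pi fun ik => if ik.1 = j then EuclideanSpace.proj ik.2 else 0)

theorem blockIncl_apply (j : Fin p) (x : EuclideanSpace ℝ (Fin d)) (ik : Fin p × Fin d) :
    blockIncl j x ik = if ik.1 = j then x ik.2 else 0 := by
  by_cases h : ik.1 = j <;> simp [blockIncl, h]

theorem inner_blockIncl (a : GroupedSpace p d) (j : Fin p) (x : EuclideanSpace ℝ (Fin d)) :
    inner ℝ a (blockIncl j x) = inner ℝ (blockOf a j) x := by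
  simp [PiLp.inner_apply, blockIncl_apply, Fintype.sum_prod_type]

theorem updateBlock_eq_add_blockIncl (α : GroupedSpace p d) (j : Fin p)
    (x : EuclideanSpace ℝ (Fin d)) :
    updateBlock α j x = updateBlock α j 0 + blockIncl j x := by
  ext ik
  by_cases h : ik.1 = j <;> simp [updateBlock, blockIncl_apply, h]

theorem updateBlock_blockOf (α : GroupedSpace p d) (j : Fin p) :
    updateBlock α j (blockOf α j) = α := by
  ext ik
  by_cases h : ik.1 = j
  · simp [updateBlock, ← h]
  · simp [updateBlock, h]

theorem gradBlock_eq_blockOf_gradAlpha {q : ℕ}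
    {f : GroupedSpace p d → EuclideanSpace ℝ (Fin q) → ℝ} {α : GroupedSpace p d}
    {θ : EuclideanSpace ℝ (Fin q)} (hf : DifferentiableAt ℝ (fun a => f a θ) α) (j : Fin p) :
    gradBlock f j α θ = blockOf (gradAlpha f α θ) j := by
  have hupdate : HasFDerivAt (updateBlock α j) (blockIncl j) (blockOf α j) := by
    rw [funext (updateBlock_eq_add_blockIncl α j)]
    exact (blockIncl j).hasFDerivAt.const_add _
  rw [← updateBlock_blockOf α j] at hf
  have hcomp := hf.hasGradientAt.hasFDerivAt.comp (blockOf α j) hupdate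
  refine (hasGradientAt_iff_hasFDerivAt.2 (hcomp.congr_fderiv ?_)).gradient
  ext x
  simp only [ContinuousLinearMap.comp_apply, InnerProductSpace.toDual_apply_apply,
    updateBlock_blockOf, inner_blockIncl, gradAlpha]

theorem IsSmooth.gradBlock_eq {q : ℕ} {L : ℝ}
    {f : GroupedSpace p d → EuclideanSpace ℝ (Fin q) → ℝ} (hf : IsSmooth L f) (j : Fin p)
    (α : GroupedSpace p d) (θ : EuclideanSpace ℝ (Fin q)) :
    gradBlock f j α θ = blockOf (gradAlpha f α θ) j :=
  gradBlock_eq_blockOf_gradAlpha (hasGradientAt_gradAlpha hf.1 α θ).differentiableAt j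

end Blocks

theorem LipschitzWith.memLp_comp {Ω E F : Type*} {mΩ : MeasurableSpace Ω} {μ : Measure Ω}
    [IsFiniteMeasure μ] [NormedAddCommGroup E] [NormedAddCommGroup F] {K : NNReal} {g : E → F}
    (hg : LipschitzWith K g) {f : Ω → E} {p : ENNReal} (hf : MemLp f p μ) :
    MemLp (g ∘ f) p μ := by
  have hg0 : LipschitzWith K (fun x => g x - g 0) := by
    simpa using hg.sub (LipschitzWith.const (g 0))
  have hsplit : g ∘ f = (fun x => g x - g 0) ∘ f + fun _ => g 0 := by
    ext1 ω; simp
  rw [hsplit]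
  exact (hg0.comp_memLp (by simp) hf).add (memLp_const (g 0))

section Probability

variable {Ω E : Type*} {m mΩ : MeasurableSpace Ω} {μ : Measure Ω}
  [NormedAddCommGroup E] [InnerProductSpace ℝ E]

theorem MeasureTheory.MemLp.integrable_inner {f g : Ω → E} (hf : MemLp f 2 μ)
    (hg : MemLp g 2 μ) : Integrable (fun ω => inner ℝ (f ω) (g ω)) μ := by
  rw [← memLp_one_iff_integrable]
  refine hf.of_bilin (fun x y => inner ℝ x y) 1 hg (hf.1.inner hg.1) ?_
  filter_upwards with ω
  simpa using nnnorm_inner_le_nnnorm (𝕜 := ℝ) (f ω) (g ω)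

theorem integral_le_of_condExp_le_const [IsProbabilityMeasure μ] (hm : m ≤ mΩ) {f : Ω → ℝ}
    {c : ℝ} (hf : μ[f | m] ≤ᵐ[μ] fun _ => c) : ∫ ω, f ω ∂μ ≤ c := by
  calc ∫ ω, f ω ∂μ = ∫ ω, (μ[f | m]) ω ∂μ := (integral_condExp hm).symm
    _ ≤ ∫ _, c ∂μ := integral_mono_ae integrable_condExp (integrable_const c) hf
    _ = c := by simp

theorem integral_inner_eq_zero_of_condExp_eq_zero [CompleteSpace E] [IsFiniteMeasure μ]
    (hm : m ≤ mΩ) {g ξ : Ω → E} (hg : StronglyMeasurable[m] g) (hg2 : MemLp g 2 μ)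
    (hξ2 : MemLp ξ 2 μ) (hξ : μ[ξ | m] =ᵐ[μ] 0) :
    ∫ ω, inner ℝ (g ω) (ξ ω) ∂μ = 0 := by
  have hpull :
      μ[fun ω => inner ℝ (g ω) (ξ ω) | m] =ᵐ[μ] fun ω => inner ℝ (g ω) (μ[ξ | m] ω) :=
    condExp_bilin_of_stronglyMeasurable_left (innerSL ℝ) hg (hg2.integrable_inner hξ2)
      (hξ2.integrable one_le_two)
  calc ∫ ω, inner ℝ (g ω) (ξ ω) ∂μ
        = ∫ ω, (μ[fun ω => inner ℝ (g ω) (ξ ω) | m]) ω ∂μ := (integral_condExp hm).symm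
    _ = 0 := by
        rw [integral_eq_zero_of_ae]
        filter_upwards [hpull, hξ] with ω hω hξω
        simp only [hω, hξω, Pi.zero_apply, inner_zero_right]

end Probability

section Step

variable {p d q : ℕ} {L η ν : ℝ} {f : GroupedSpace p d → EuclideanSpace ℝ (Fin q) → ℝ}

theorem IsSmooth.alternating_step_le (hf : IsSmooth L f) {α a' c v : GroupedSpace p d}
    {θ t' w : EuclideanSpace ℝ (Fin q)} (ha' : a' = α - η • (c + v))
    (ht' : t' = θ - ν • (gradTheta f a' θ + w)) :
    f a' t' + (ν - L * ν ^ 2 / 2) * ‖gradTheta f a' θ‖ ^ 2 ≤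
      f α θ - η * inner ℝ (gradAlpha f α θ) c + L * η ^ 2 / 2 * ‖c‖ ^ 2
        + inner ℝ ((L * η ^ 2) • c - η • gradAlpha f α θ) v + L * η ^ 2 / 2 * ‖v‖ ^ 2
        + (L * ν ^ 2 - ν) * inner ℝ (gradTheta f a' θ) w + L * ν ^ 2 / 2 * ‖w‖ ^ 2 := by
  have hθ := hf.le_add_inner_add a' a' θ t'
  have hα := hf.le_add_inner_add α a' θ θ
  have ha : a' - α = -(η • (c + v)) := by rw [ha']; abel
  have ht : t' - θ = -(ν • (gradTheta f a' θ + w)) := by rw [ht']; abel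
  simp only [sub_self, inner_zero_right, norm_zero, ha, ht, inner_neg_right, norm_neg,
    real_inner_smul_right, inner_add_right, norm_smul, mul_pow, Real.norm_eq_abs, sq_abs,
    norm_add_sq_real, real_inner_self_eq_norm_sq] at hθ hα
  simp only [inner_sub_left, real_inner_smul_left]
  linear_combination hθ + hα

theorem IsSmooth.integral_alternating_step_le {Ω : Type*} {m mΩ : MeasurableSpace Ω}
    {μ : Measure Ω} [IsProbabilityMeasure μ] (hf : IsSmooth L f) (hm : m ≤ mΩ)
    {α c : GroupedSpace p d} {θ : EuclideanSpace ℝ (Fin q)} {φ a' : Ω → GroupedSpace p d}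
    {ξ t' : Ω → EuclideanSpace ℝ (Fin q)} (hφm : Measurable[m] φ) (hφ2 : MemLp φ 2 μ)
    (hφmean : ∫ ω, φ ω ∂μ = 0) (hξ2 : MemLp ξ 2 μ) (hξmean : μ[ξ | m] =ᵐ[μ] 0)
    (ha' : ∀ ω, a' ω = α - η • (c + φ ω))
    (ht' : ∀ ω, t' ω = θ - ν • (gradTheta f (a' ω) θ + ξ ω))
    (hint : Integrable (fun ω => f (a' ω) (t' ω)) μ) :
    ∫ ω, f (a' ω) (t' ω) ∂μ + (ν - L * ν ^ 2 / 2) * ∫ ω, ‖gradTheta f (a' ω) θ‖ ^ 2 ∂μ ≤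
      f α θ - η * inner ℝ (gradAlpha f α θ) c + L * η ^ 2 / 2 * ‖c‖ ^ 2
        + L * η ^ 2 / 2 * ∫ ω, ‖φ ω‖ ^ 2 ∂μ + L * ν ^ 2 / 2 * ∫ ω, ‖ξ ω‖ ^ 2 ∂μ := by
  set F : GroupedSpace p d → EuclideanSpace ℝ (Fin q) :=
    fun x => gradTheta f (α - η • (c + x)) θ
  have hF : LipschitzWith (L.toNNReal * ‖η‖₊) F :=
    (hf.lipschitzWith_gradTheta θ).comp <| LipschitzWith.of_dist_le_mul fun x y => by
      simp [dist_eq_norm, ← smul_sub, norm_smul, norm_sub_rev]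
  have hg : (fun ω => gradTheta f (a' ω) θ) = F ∘ φ := by
    ext1 ω; simp [F, ha']
  have hgm : StronglyMeasurable[m] fun ω => gradTheta f (a' ω) θ :=
    hg ▸ (hF.continuous.measurable.comp hφm).stronglyMeasurable
  have hg2 : MemLp (fun ω => gradTheta f (a' ω) θ) 2 μ := hg ▸ hF.memLp_comp hφ2
  have hφ1 : Integrable φ μ := hφ2.integrable one_le_two
  have hcross : ∫ ω, inner ℝ (gradTheta f (a' ω) θ) (ξ ω) ∂μ = 0 :=
    integral_inner_eq_zero_of_condExp_eq_zero hm hgm hg2 hξ2 hξmean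
  have hφ2i : Integrable (fun ω => ‖φ ω‖ ^ 2) μ := hφ2.integrable_norm_pow two_ne_zero
  have hξ2i : Integrable (fun ω => ‖ξ ω‖ ^ 2) μ := hξ2.integrable_norm_pow two_ne_zero
  have hg2i : Integrable (fun ω => ‖gradTheta f (a' ω) θ‖ ^ 2) μ :=
    hg2.integrable_norm_pow two_ne_zero
  have hgξ : Integrable (fun ω => inner ℝ (gradTheta f (a' ω) θ) (ξ ω)) μ :=
    hg2.integrable_inner hξ2
  have hφw (w : GroupedSpace p d) : Integrable (fun ω => inner ℝ w (φ ω)) μ :=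
    hφ1.const_inner w
  calc _ = ∫ ω, f (a' ω) (t' ω) + (ν - L * ν ^ 2 / 2) * ‖gradTheta f (a' ω) θ‖ ^ 2 ∂μ := by
        rw [integral_add hint (hg2i.const_mul _), integral_const_mul]
    _ ≤ ∫ ω, f α θ - η * inner ℝ (gradAlpha f α θ) c + L * η ^ 2 / 2 * ‖c‖ ^ 2
        + inner ℝ ((L * η ^ 2) • c - η • gradAlpha f α θ) (φ ω) + L * η ^ 2 / 2 * ‖φ ω‖ ^ 2
        + (L * ν ^ 2 - ν) * inner ℝ (gradTheta f (a' ω) θ) (ξ ω)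
        + L * ν ^ 2 / 2 * ‖ξ ω‖ ^ 2 ∂μ :=
        integral_mono (hint.add (hg2i.const_mul _)) (by fun_prop) fun ω =>
          hf.alternating_step_le (ha' ω) (ht' ω)
    _ = _ := by
        rw [integral_add (by fun_prop) (by fun_prop), integral_add (by fun_prop) (by fun_prop),
          integral_add (by fun_prop) (by fun_prop), integral_add (by fun_prop) (by fun_prop)]
        simp [integral_const_mul, integral_inner hφ1, hφmean, hcross]

end Step

theorem per_iteration_validation_bound_general
    {p d q : ℕ}
    (G H : GroupedSpace p d → EuclideanSpace ℝ (Fin q) → ℝ)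
    {L ρ lam σ η ν : ℝ} (hL : 0 < L)
    (hGsmooth : IsSmooth L G) (hHsmooth : IsSmooth L H)
    (hHρ : ∀ (j : Fin p) (a : GroupedSpace p d) (t : EuclideanSpace ℝ (Fin q)),
      ‖gradBlock H j a t‖ ≤ ρ)
    (hlam : 0 ≤ lam) (hη : 0 ≤ η)
    (α : GroupedSpace p d) (θ : EuclideanSpace ℝ (Fin q))
    (hblocks : ∀ j : Fin p, blockOf α j ≠ 0)
    {Ω : Type*} [MeasurableSpace Ω] (μ : Measure Ω) [IsProbabilityMeasure μ]
    (φ : Ω → GroupedSpace p d) (hφmeas : Measurable φ) (hφ2 : MemLp φ 2 μ)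
    (hφmean : ∫ ω, φ ω ∂μ = 0) (hφvar : ∫ ω, ‖φ ω‖ ^ 2 ∂μ ≤ σ ^ 2)
    (ᾱ' : Ω → GroupedSpace p d)
    (hᾱ' : ∀ ω, ᾱ' ω = α - η • (gradAlpha H α θ + φ ω + lam • unitBlocks α))
    (ξ : Ω → EuclideanSpace ℝ (Fin q)) (hξ2 : MemLp ξ 2 μ)
    (hξmean : μ[ξ | MeasurableSpace.comap φ inferInstance] =ᵐ[μ] 0)
    (hξvar : μ[(fun ω => ‖ξ ω‖ ^ 2) | MeasurableSpace.comap φ inferInstance]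
      ≤ᵐ[μ] (fun _ => σ ^ 2))
    (θ' : Ω → EuclideanSpace ℝ (Fin q))
    (hθ' : ∀ ω, θ' ω = θ - ν • (gradTheta G (ᾱ' ω) θ + ξ ω))
    (hint1 : Integrable (fun ω => G (ᾱ' ω) (θ' ω)) μ) :
    (ν - L * ν ^ 2 / 2) * ∫ ω, ‖gradTheta G (ᾱ' ω) θ‖ ^ 2 ∂μ ≤
      G α θ - (∫ ω, G (ᾱ' ω) (θ' ω) ∂μ) + (L * ν ^ 2 / 2) * σ ^ 2
        + (ρ + lam) * η * ∑ j : Fin p, ‖gradBlock G j α θ‖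
        + (L * η ^ 2 / 2) * (p * (ρ + lam) ^ 2 + σ ^ 2) := by
  set c := gradAlpha H α θ + lam • unitBlocks α
  have hc (j : Fin p) : ‖blockOf c j‖ ≤ ρ + lam :=
    norm_blockOf_add_smul_unitBlocks_le (hHsmooth.gradBlock_eq j α θ ▸ hHρ j α θ) (hblocks j) hlam
  have hdescent : -inner ℝ (gradAlpha G α θ) c ≤ (ρ + lam) * ∑ j, ‖gradBlock G j α θ‖ := by
    simp only [hGsmooth.gradBlock_eq]
    exact (neg_le_abs _).trans (abs_inner_le_of_norm_blockOf_le hc _)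
  have hstep := hGsmooth.integral_alternating_step_le hφmeas.comap_le (comap_measurable φ) hφ2
    hφmean hξ2 hξmean (fun ω => by rw [hᾱ' ω, add_right_comm]) hθ' hint1
  have hξvar' := integral_le_of_condExp_le_const hφmeas.comap_le hξvar
  have hη2 : 0 ≤ L * η ^ 2 / 2 := by positivity
  have hν2 : 0 ≤ L * ν ^ 2 / 2 := by positivity
  linarith [mul_le_mul_of_nonneg_left hdescent hη,
    mul_le_mul_of_nonneg_left (norm_sq_le_of_norm_blockOf_le hc) hη2,
    mul_le_mul_of_nonneg_left hφvar hη2, mul_le_mul_of_nonneg_left hξvar' hν2]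

/-- **Per-iteration expected bound for the validation loss** (inequality (15) in the proof of
Theorem 1 of "Generalized Sparse Additive Model with Unknown Link Function"). -/
theorem per_iteration_validation_bound
    {p d q : ℕ} (hp : 1 ≤ p) (hd : 1 ≤ d) (hq : 1 ≤ q)
    (G H : GroupedSpace p d → EuclideanSpace ℝ (Fin q) → ℝ)
    {L ρ lam σ η ν : ℝ} (hL : 0 < L)
    (hGsmooth : IsSmooth L G) (hHsmooth : IsSmooth L H)
    (hHρ : ∀ (j : Fin p) (a : GroupedSpace p d) (t : EuclideanSpace ℝ (Fin q)),
      ‖gradBlock H j a t‖ ≤ ρ)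
    (hlam : 0 ≤ lam) (hσ : 0 ≤ σ) (hη : 0 ≤ η) (hν : 0 ≤ ν)
    (α : GroupedSpace p d) (θ : EuclideanSpace ℝ (Fin q))
    (hblocks : ∀ j : Fin p, blockOf α j ≠ 0)
    {Ω : Type*} [MeasurableSpace Ω] (μ : Measure Ω) [IsProbabilityMeasure μ]
    (φ : Ω → GroupedSpace p d) (hφmeas : Measurable φ) (hφ2 : MemLp φ 2 μ)
    (hφmean : ∫ ω, φ ω ∂μ = 0) (hφvar : ∫ ω, ‖φ ω‖ ^ 2 ∂μ ≤ σ ^ 2)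
    (ᾱ' : Ω → GroupedSpace p d)
    (hᾱ' : ∀ ω, ᾱ' ω = α - η • (gradAlpha H α θ + φ ω + lam • unitBlocks α))
    (ξ : Ω → EuclideanSpace ℝ (Fin q)) (hξmeas : Measurable ξ) (hξ2 : MemLp ξ 2 μ)
    (hξmean : μ[ξ | MeasurableSpace.comap φ inferInstance] =ᵐ[μ] 0)
    (hξvar : μ[(fun ω => ‖ξ ω‖ ^ 2) | MeasurableSpace.comap φ inferInstance]
      ≤ᵐ[μ] (fun _ => σ ^ 2))
    (θ' : Ω → EuclideanSpace ℝ (Fin q))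
    (hθ' : ∀ ω, θ' ω = θ - ν • (gradTheta G (ᾱ' ω) θ + ξ ω))
    (hint1 : Integrable (fun ω => G (ᾱ' ω) (θ' ω)) μ)
    (hint2 : Integrable (fun ω => ‖gradTheta G (ᾱ' ω) θ‖ ^ 2) μ) :
    (ν - L * ν ^ 2 / 2) * ∫ ω, ‖gradTheta G (ᾱ' ω) θ‖ ^ 2 ∂μ ≤
      G α θ - (∫ ω, G (ᾱ' ω) (θ' ω) ∂μ) + (L * ν ^ 2 / 2) * σ ^ 2
        + (ρ + lam) * η * ∑ j : Fin p, ‖gradBlock G j α θ‖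
        + (L * η ^ 2 / 2) * (p * (ρ + lam) ^ 2 + σ ^ 2) :=
  per_iteration_validation_bound_general G H hL hGsmooth hHsmooth hHρ hlam hη α θ hblocks μ φ hφmeas
    hφ2 hφmean hφvar ᾱ' hᾱ' ξ hξ2 hξmean hξvar θ' hθ' hint1

end
end
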